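/- arXiv:math/0405079 — 5 statements merged into one kernel-verified Lean document; each statement's English description precedes it below -/
import Mathlib

section
/- With the notation of the unique factorization σ∘α = σ_*(α)∘α^*(σ) (with σ_*(α) an order-preserving injection and α^*(σ) a permutation), for injective maps β : Fin l → Fin m and α : Fin m → Fin n and a permutation σ of Fin n one has (α∘β)^*(σ) = β^*(α^*(σ)), i.e. the assignment σ ↦ α^*(σ) is contravariantly functorial in α. -/
/-!
Both `ρ` and `π` are permutation parts of factorizations of `σ ∘ (α ∘ β)` through a strictly
monotone map (`γ`, resp. `δ ∘ ε`). Such factorizations are unique, since a strictly monotone map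
on a well order is determined by its range.
-/

section
variable {ι κ : Type*} [LinearOrder ι] [WellFoundedLT ι] [Preorder κ]

theorem StrictMono.eq_of_comp_perm_eq {f g : ι → κ} (hf : StrictMono f) (hg : StrictMono g)
    {ρ π : Equiv.Perm ι} (h : f ∘ ρ = g ∘ π) : f = g := by
  refine (hf.range_inj hg).1 ?_
  rw [← ρ.surjective.range_comp f, h, π.surjective.range_comp g]

theorem Equiv.Perm.eq_of_strictMono_comp_eq {f g : ι → κ} (hf : StrictMono f)
    (hg : StrictMono g) {ρ π : Equiv.Perm ι} (h : f ∘ ρ = g ∘ π) : ρ = π := by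
  obtain rfl := hf.eq_of_comp_perm_eq hg h
  exact Equiv.ext fun x => hf.injective (congrFun h x)

end

/-- `ρ`, `τ` and `π` stand for `(α ∘ β)^*(σ)`, `α^*(σ)` and `β^*(τ)`, given by the
factorizations `h1`, `h2` and `h3`. -/
theorem units_traces_star_functorial_general (l m n : ℕ)
    (β : Fin l → Fin m)
    (α : Fin m → Fin n)
    (σ : Equiv.Perm (Fin n))
    (γ : Fin l → Fin n) (ρ : Equiv.Perm (Fin l)) (hγ : StrictMono γ)
    (h1 : σ ∘ (α ∘ β) = γ ∘ ⇑ρ)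
    (δ : Fin m → Fin n) (τ : Equiv.Perm (Fin m)) (hδ : StrictMono δ)
    (h2 : σ ∘ α = δ ∘ ⇑τ)
    (ε : Fin l → Fin m) (π : Equiv.Perm (Fin l)) (hε : StrictMono ε)
    (h3 : ⇑τ ∘ β = ε ∘ ⇑π) :
    ρ = π := by
  have hfactor : σ ∘ (α ∘ β) = (δ ∘ ε) ∘ π :=
    calc σ ∘ (α ∘ β) = (σ ∘ α) ∘ β := rfl
      _ = δ ∘ (τ ∘ β) := by rw [h2]; rfl
      _ = (δ ∘ ε) ∘ π := by rw [h3]; rfl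
  exact Equiv.Perm.eq_of_strictMono_comp_eq hγ (hδ.comp hε) (h1.symm.trans hfactor)

/-- **Contravariant functoriality of the permutation part of the factorization.**
For an injection `α : Fin m → Fin n` and a permutation `σ` of `Fin n`, the unique
factorization `σ ∘ α = σ_*(α) ∘ α^*(σ)` has `σ_*(α)` an order-preserving injection and
`α^*(σ)` a permutation of `Fin m`.  Given injections `β : Fin l → Fin m`, `α : Fin m → Fin n`
and a permutation `σ` of `Fin n`, one has `(α ∘ β)^*(σ) = β^*(α^*(σ))`.

Here `ρ` plays the role of `(α ∘ β)^*(σ)` (via the factorization `h1`), `τ` plays the role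
of `α^*(σ)` (via `h2`), and `π` plays the role of `β^*(α^*(σ)) = β^*(τ)` (via `h3`). -/
theorem units_traces_star_functorial (l m n : ℕ)
    (β : Fin l → Fin m) (hβ : Function.Injective β)
    (α : Fin m → Fin n) (hα : Function.Injective α)
    (σ : Equiv.Perm (Fin n))
    (γ : Fin l → Fin n) (ρ : Equiv.Perm (Fin l)) (hγ : StrictMono γ)
    (h1 : σ ∘ (α ∘ β) = γ ∘ ⇑ρ)
    (δ : Fin m → Fin n) (τ : Equiv.Perm (Fin m)) (hδ : StrictMono δ)
    (h2 : σ ∘ α = δ ∘ ⇑τ)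
    (ε : Fin l → Fin m) (π : Equiv.Perm (Fin l)) (hε : StrictMono ε)
    (h3 : ⇑τ ∘ β = ε ∘ ⇑π) :
    ρ = π :=
  units_traces_star_functorial_general l m n β α σ γ ρ hγ h1 δ τ hδ h2 ε π hε h3
end

section
/- For a discrete commutative ring R and n×n matrices A⁰,…,Aᵏ over R, the Hochschild multi-trace tr(A⁰⊗⋯⊗Aᵏ) = Σ_{s₀,…,s_k} a⁰_{s_k s₀} ⊗ ⋯ ⊗ aᵏ_{s_{k-1} s_k} is invariant under the cyclic operator: applying the cyclic permutation (A⁰,…,Aᵏ) ↦ (Aᵏ, A⁰,…,A^{k-1}) and then taking the multi-trace equals applying the cyclic permutation of tensor factors to tr(A⁰⊗⋯⊗Aᵏ). -/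
open scoped TensorProduct

/-- The Hochschild multi-trace `tr(A⁰ ⊗ ⋯ ⊗ Aᵏ) = Σ_{s₀,…,s_k} a⁰_{s_k s₀} ⊗ ⋯ ⊗
aᵏ_{s_{k-1} s_k}`, as an element of the `(k+1)`-fold tensor power `R^{⊗(k+1)}`.  Factor
`i` is `aⁱ_{s_{i-1}, s_i}` where the index `i - 1` is taken cyclically in `Fin (k+1)`. -/
noncomputable def multiTrace {R : Type} [CommRing R] {k : ℕ} {ι : Type} [Fintype ι]
    (A : Fin (k + 1) → Matrix ι ι R) : PiTensorProduct R (fun _ : Fin (k + 1) => R) :=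
  ∑ s : Fin (k + 1) → ι, PiTensorProduct.tprod R (fun i => A i (s (i - 1)) (s i))

-- The substitution `s ↦ s ∘ (· + 1)` of summation variables matches the summands termwise.
theorem multiTrace_comp_sub_one {R : Type} [CommRing R] {k : ℕ} {ι : Type} [Fintype ι]
    (A : Fin (k + 1) → Matrix ι ι R) :
    multiTrace (fun i => A (i - 1)) =
      PiTensorProduct.reindex R (fun _ : Fin (k + 1) => R)
        (Equiv.addRight (1 : Fin (k + 1))) (multiTrace A) := by
  simp only [multiTrace, map_sum, PiTensorProduct.reindex_tprod]
  refine Fintype.sum_equiv ((Equiv.addRight 1).symm.arrowCongr (Equiv.refl ι)) _ _ fun s => ?_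
  congr 1
  funext i
  simp [sub_eq_add_neg]

/-- **Cyclic invariance of the Hochschild multi-trace.**  Applying the cyclic permutation
`(A⁰,…,Aᵏ) ↦ (Aᵏ, A⁰,…,A^{k-1})` to the matrices and then taking the multi-trace equals
applying the cyclic permutation of tensor factors (moving the last factor to the front,
i.e. reindexing along `i ↦ i + 1`) to `tr(A⁰ ⊗ ⋯ ⊗ Aᵏ)`. -/
theorem units_traces_multitrace_cyclic {R : Type} [CommRing R] (k n : ℕ)
    (A : Fin (k + 1) → Matrix (Fin n) (Fin n) R) :
    multiTrace (fun i => A (i - 1)) =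
      PiTensorProduct.reindex R (fun _ : Fin (k + 1) => R)
        (Equiv.addRight (1 : Fin (k + 1))) (multiTrace A) :=
  multiTrace_comp_sub_one A
end

section
/- Let S be a finite pointed set with non-basepoint part S̄, and let 𝓓(S) be the category whose objects are functors θ from the poset of subsets of S̄ to the category 𝓘 of finite sets and injections, such that whenever U ∩ V = ∅ the diagram θ_U → θ_{U∪V} ← θ_V exhibits θ_{U∪V} as a coproduct (disjoint union) of finite sets; morphisms are arbitrary natural transformations. Then the restriction functor π_S : 𝓓(S) → 𝓘^{S̄} sending θ to its values on singletons is an equivalence of categories. -/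
open CategoryTheory

/-- The objects of the category `𝓘`: the finite sets `{1,…,n}`, encoded by their
cardinality. -/
structure IInj where
  n : ℕ

/-- The category `𝓘` of finite sets and injective maps. -/
instance : Category IInj where
  Hom a b := { f : Fin a.n → Fin b.n // Function.Injective f }
  id _ := ⟨id, fun _ _ h => h⟩
  comp f g := ⟨g.1 ∘ f.1, g.2.comp f.2⟩
  id_comp _ := rfl
  comp_id _ := rfl
  assoc _ _ _ := rfl

/-- A functor `θ` from the poset of subsets of `S̄` to `𝓘` is a *sum diagram* if for all
disjoint `U, V` the diagram `θ_U → θ_{U∪V} ← θ_V` exhibits `θ_{U∪V}` as a coproduct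
(disjoint union) of finite sets, i.e. the induced map `θ_U ⊔ θ_V → θ_{U∪V}` is a
bijection. -/
def IsSumDiagram {σ : Type} [DecidableEq σ] (θ : Finset σ ⥤ IInj) : Prop :=
  ∀ U V : Finset σ, Disjoint U V →
    Function.Bijective
      (Sum.elim (θ.map (homOfLE (le_sup_left : U ≤ U ⊔ V))).1
        (θ.map (homOfLE (le_sup_right : V ≤ U ⊔ V))).1)

/-- The category `𝓓(S)` of `S̄`-indexed sum diagrams in `𝓘`; morphisms are arbitrary
natural transformations. -/
abbrev SumDiagramCat (σ : Type) [DecidableEq σ] := ObjectProperty.FullSubcategory (IsSumDiagram (σ := σ))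

/-- The restriction functor `π_S : 𝓓(S) → 𝓘^{S̄}` sending a sum diagram to its values
on singletons. -/
def piS (σ : Type) [DecidableEq σ] : SumDiagramCat σ ⥤ (σ → IInj) where
  obj θ := fun s => θ.obj.obj {s}
  map η := fun s => η.hom.app {s}
  map_id _ := rfl
  map_comp _ _ := rfl

/-!
A sum diagram `θ` is determined by its values on singletons: for every `U`, the maps
`θ_{s} → θ_U` for `s ∈ U` together form a bijection `∐_{s ∈ U} θ_{s} ≅ θ_U` (surjective by
induction on `U`, injective because `θ_{s} ⊔ θ_{t} ≅ θ_{{s,t}}` for `s ≠ t`). These bijections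
are natural in `U`, so a natural transformation is determined by its singleton components and
any family of singleton components extends to one. Conversely, `U ↦ ∐_{s ∈ U} F_s`, transported
to `𝓘` by enumerations, is a sum diagram restricting to any given family `F`.
-/

namespace IInj

@[simp]
lemma comp_apply {a b c : IInj} (f : a ⟶ b) (g : b ⟶ c) (x : Fin a.n) :
    (f ≫ g).1 x = g.1 (f.1 x) :=
  rfl

@[ext]
lemma hom_ext {a b : IInj} {f g : a ⟶ b} (h : ∀ x, f.1 x = g.1 x) : f = g :=
  Subtype.ext (funext h)

end IInj

namespace SumDiagram

variable {σ : Type}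

abbrev SigmaOver (n : σ → ℕ) (U : Finset σ) : Type :=
  Σ s : {x // x ∈ U}, Fin (n s)

namespace SigmaOver

variable {n m : σ → ℕ}

def incl {U V : Finset σ} (h : U ≤ V) (p : SigmaOver n U) : SigmaOver n V :=
  ⟨⟨p.1.1, h p.1.2⟩, p.2⟩

lemma incl_injective {U V : Finset σ} (h : U ≤ V) : Function.Injective (incl (n := n) h) := by
  rintro ⟨⟨s, hs⟩, y⟩ ⟨⟨t, ht⟩, z⟩ hpq
  simp only [incl, Sigma.mk.injEq, Subtype.mk.injEq] at hpq
  obtain ⟨rfl, hyz⟩ := hpq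
  rw [eq_of_heq hyz]

def map (g : ∀ s, Fin (n s) → Fin (m s)) {U : Finset σ} (p : SigmaOver n U) : SigmaOver m U :=
  ⟨p.1, g p.1.1 p.2⟩

lemma map_injective {g : ∀ s, Fin (n s) → Fin (m s)} (hg : ∀ s, Function.Injective (g s))
    (U : Finset σ) : Function.Injective (map g (U := U)) := by
  rintro ⟨⟨s, hs⟩, y⟩ ⟨⟨t, ht⟩, z⟩ hpq
  simp only [map, Sigma.mk.injEq, Subtype.mk.injEq] at hpq
  obtain ⟨rfl, hyz⟩ := hpq
  rw [hg s (eq_of_heq hyz)]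

lemma card_singleton (s : σ) : Fintype.card (SigmaOver n {s}) = n s := by
  simp [SigmaOver, Fintype.card_sigma]

end SigmaOver

def singletonHom {U : Finset σ} {s : σ} (hs : s ∈ U) : ({s} : Finset σ) ⟶ U :=
  homOfLE (Finset.singleton_subset_iff.mpr hs)

variable {θ θ' : Finset σ ⥤ IInj}

abbrev singletonCard (θ : Finset σ ⥤ IInj) (s : σ) : ℕ :=
  (θ.obj {s}).n

def fromSigma (θ : Finset σ ⥤ IInj) (U : Finset σ) :
    SigmaOver (singletonCard θ) U → Fin (θ.obj U).n :=
  fun p => (θ.map (singletonHom p.1.2)).1 p.2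

lemma map_fromSigma {U V : Finset σ} (f : U ⟶ V) (p : SigmaOver (singletonCard θ) U) :
    (θ.map f).1 (fromSigma θ U p) = fromSigma θ V (SigmaOver.incl (leOfHom f) p) := by
  rw [fromSigma, ← IInj.comp_apply, ← θ.map_comp]
  rfl

lemma fromSigma_singleton (s : σ) (y : Fin (θ.obj {s}).n) :
    fromSigma θ {s} ⟨⟨s, Finset.mem_singleton_self s⟩, y⟩ = y := by
  rw [fromSigma, show singletonHom (Finset.mem_singleton_self s) = 𝟙 _ from rfl, θ.map_id]
  rfl

noncomputable def sigmaDiagram (n : σ → ℕ) : Finset σ ⥤ IInj where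
  obj U := ⟨Fintype.card (SigmaOver n U)⟩
  map {U V} h :=
    ⟨Fintype.equivFin _ ∘ SigmaOver.incl (leOfHom h) ∘ (Fintype.equivFin _).symm,
      (Fintype.equivFin _).injective.comp
        ((SigmaOver.incl_injective _).comp (Fintype.equivFin _).symm.injective)⟩
  map_id U := IInj.hom_ext fun x => by
    simp only [Function.comp_apply]
    exact (Fintype.equivFin _).apply_symm_apply x
  map_comp {U V W} h h' := IInj.hom_ext fun x => by
    simp only [Function.comp_apply, IInj.comp_apply, Equiv.symm_apply_apply]
    rfl

lemma sigmaDiagram_obj_singleton (n : σ → ℕ) (s : σ) : (sigmaDiagram n).obj {s} = ⟨n s⟩ := by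
  simp only [sigmaDiagram, SigmaOver.card_singleton]

variable [DecidableEq σ]

lemma isEmpty_obj_empty (hθ : IsSumDiagram θ) : IsEmpty (Fin (θ.obj ∅).n) :=
  ⟨fun x => Sum.inl_ne_inr ((hθ ∅ ∅ disjoint_bot_left).1 (a₁ := .inl x) (a₂ := .inr x) rfl)⟩

lemma fromSigma_surjective (hθ : IsSumDiagram θ) (U : Finset σ) :
    Function.Surjective (fromSigma θ U) := by
  induction U using Finset.induction_on with
  | empty => exact fun x => ((isEmpty_obj_empty hθ).false x).elim
  | @insert a U ha ih =>
    rw [Finset.insert_eq, ← Finset.sup_eq_union]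
    intro x
    obtain ⟨y | y, rfl⟩ := (hθ {a} U (Finset.disjoint_singleton_left.mpr ha)).2 x
    · exact ⟨⟨⟨a, by simp⟩, y⟩, rfl⟩
    · obtain ⟨p, rfl⟩ := ih y
      exact ⟨SigmaOver.incl le_sup_right p, (map_fromSigma _ p).symm⟩

lemma fromSigma_injective (hθ : IsSumDiagram θ) (U : Finset σ) :
    Function.Injective (fromSigma θ U) := by
  rintro ⟨⟨s, hs⟩, y⟩ ⟨⟨t, ht⟩, z⟩ h
  by_cases hst : s = t
  · subst hst
    obtain rfl := (θ.map (singletonHom hs)).2 h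
    rfl
  · -- both elements come from `θ_{s,t}`, where they lie in different summands
    have hW : ({s} : Finset σ) ⊔ {t} ≤ U := by simp [Finset.insert_subset_iff, hs, ht]
    change (θ.map (homOfLE le_sup_left ≫ homOfLE hW)).1 y =
      (θ.map (homOfLE le_sup_right ≫ homOfLE hW)).1 z at h
    rw [θ.map_comp, θ.map_comp] at h
    exact absurd ((hθ {s} {t} (Finset.disjoint_singleton.mpr hst)).1
      (a₁ := .inl y) (a₂ := .inr z) ((θ.map (homOfLE hW)).2 h)) Sum.inl_ne_inr

noncomputable def sigmaEquiv (hθ : IsSumDiagram θ) (U : Finset σ) :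
    SigmaOver (singletonCard θ) U ≃ Fin (θ.obj U).n :=
  Equiv.ofBijective (fromSigma θ U) ⟨fromSigma_injective hθ U, fromSigma_surjective hθ U⟩

lemma natTrans_ext (hθ : IsSumDiagram θ) {η η' : θ ⟶ θ'}
    (h : ∀ s : σ, η.app {s} = η'.app {s}) : η = η' := by
  ext U : 2
  refine IInj.hom_ext fun x => ?_
  obtain ⟨⟨⟨s, hs⟩, y⟩, rfl⟩ := fromSigma_surjective hθ U x
  change (θ.map (singletonHom hs) ≫ η.app U).1 y = (θ.map (singletonHom hs) ≫ η'.app U).1 y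
  rw [η.naturality, η'.naturality, h]

noncomputable def extendApp (hθ : IsSumDiagram θ) (hθ' : IsSumDiagram θ')
    (g : ∀ s : σ, θ.obj {s} ⟶ θ'.obj {s}) (U : Finset σ) : θ.obj U ⟶ θ'.obj U :=
  ⟨fromSigma θ' U ∘ SigmaOver.map (fun s => (g s).1) ∘ (sigmaEquiv hθ U).symm,
    (fromSigma_injective hθ' U).comp
      ((SigmaOver.map_injective (fun s => (g s).2) U).comp (sigmaEquiv hθ U).symm.injective)⟩

lemma extendApp_fromSigma (hθ : IsSumDiagram θ) (hθ' : IsSumDiagram θ')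
    (g : ∀ s : σ, θ.obj {s} ⟶ θ'.obj {s}) {U : Finset σ} (p : SigmaOver (singletonCard θ) U) :
    (extendApp hθ hθ' g U).1 (fromSigma θ U p) =
      fromSigma θ' U (SigmaOver.map (fun s => (g s).1) p) :=
  congrArg (fromSigma θ' U ∘ SigmaOver.map _) ((sigmaEquiv hθ U).symm_apply_apply p)

noncomputable def extend (hθ : IsSumDiagram θ) (hθ' : IsSumDiagram θ')
    (g : ∀ s : σ, θ.obj {s} ⟶ θ'.obj {s}) : θ ⟶ θ' where
  app := extendApp hθ hθ' g
  naturality U V f := IInj.hom_ext fun x => by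
    obtain ⟨p, rfl⟩ := fromSigma_surjective hθ U x
    simp only [IInj.comp_apply, map_fromSigma, extendApp_fromSigma]
    rfl

lemma extend_app_singleton (hθ : IsSumDiagram θ) (hθ' : IsSumDiagram θ')
    (g : ∀ s : σ, θ.obj {s} ⟶ θ'.obj {s}) (s : σ) : (extend hθ hθ' g).app {s} = g s :=
  IInj.hom_ext fun y => by
    conv_lhs => rw [← fromSigma_singleton (θ := θ) s y]
    exact (extendApp_fromSigma hθ hθ' g _).trans (fromSigma_singleton s _)

lemma isSumDiagram_sigmaDiagram (n : σ → ℕ) : IsSumDiagram (sigmaDiagram n) := by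
  intro U V hUV
  set W := U ⊔ V
  have hincl : Function.Bijective
      (Sum.elim (SigmaOver.incl (n := n) (le_sup_left : U ≤ W)) (SigmaOver.incl le_sup_right)) := by
    refine ⟨(SigmaOver.incl_injective _).sumElim (SigmaOver.incl_injective _) ?_, ?_⟩
    · rintro ⟨⟨s, hs⟩, y⟩ ⟨⟨t, ht⟩, z⟩ hst
      obtain rfl : s = t := congrArg (·.1.1) hst
      exact Finset.disjoint_left.mp hUV hs ht
    · rintro ⟨⟨s, hs⟩, y⟩
      rcases Finset.mem_union.mp hs with hU | hV
      · exact ⟨Sum.inl ⟨⟨s, hU⟩, y⟩, rfl⟩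
      · exact ⟨Sum.inr ⟨⟨s, hV⟩, y⟩, rfl⟩
  have hfactor : Sum.elim ((sigmaDiagram n).map (homOfLE (le_sup_left : U ≤ W))).1
        ((sigmaDiagram n).map (homOfLE (le_sup_right : V ≤ W))).1 =
      Fintype.equivFin _ ∘ Sum.elim (SigmaOver.incl le_sup_left) (SigmaOver.incl le_sup_right) ∘
        (Equiv.sumCongr (Fintype.equivFin _) (Fintype.equivFin _)).symm := by
    ext (x | x) <;> rfl
  rw [hfactor]
  exact (Fintype.equivFin _).bijective.comp (hincl.comp (Equiv.bijective _))

end SumDiagram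

open SumDiagram

theorem units_traces_sum_diagrams_equivalence_general (σ : Type) [DecidableEq σ] :
    (piS σ).IsEquivalence := by
  refine { faithful := ⟨?_⟩, full := ⟨?_⟩, essSurj := ⟨?_⟩ }
  · exact fun {θ _} _ _ h => ObjectProperty.hom_ext _ (natTrans_ext θ.property (congrFun h))
  · exact fun {θ θ'} g => ⟨ObjectProperty.homMk (extend θ.property θ'.property g),
      funext (extend_app_singleton θ.property θ'.property g)⟩
  · exact fun F => ⟨⟨sigmaDiagram fun s => (F s).n, isSumDiagram_sigmaDiagram _⟩,
      ⟨eqToIso (funext fun s => sigmaDiagram_obj_singleton _ s)⟩⟩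

/-- **Restriction to singletons is an equivalence.**  For a finite pointed set `S` with
non-basepoint part `S̄` (here an arbitrary finite type `σ`), the restriction functor
`π_S : 𝓓(S) → 𝓘^{S̄}` is an equivalence of categories. -/
theorem units_traces_sum_diagrams_equivalence (σ : Type) [Fintype σ] [DecidableEq σ] :
    (piS σ).IsEquivalence :=
  units_traces_sum_diagrams_equivalence_general σ
end

section
/- In the setting of the previous context, for every object a ∈ 𝓘^{S̄}, the comma category (a ↓ π_S) of objects of 𝓓(S) under a has an initial object, and is therefore a connected (indeed contractible) category. -/
open CategoryTheory

/-! The free sum diagram `U ↦ ∐_{s ∈ U} a_s`, with the evident unit `a ⟶ π_S(free)`, is initial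
in `(a ↓ π_S)`. A map `f : a ⟶ π_S(ψ)` extends to `free ⟶ ψ` by sending the summand `a_s` of
`free_U` through `f_s` and `ψ({s} ≤ U)`; this is injective because in a sum diagram the images of
the `ψ_{s}`, `s ∈ U`, in `ψ_U` are pairwise disjoint. Uniqueness holds because every element of
`free_U` comes from some `free_{s}` by naturality. -/

namespace IsSumDiagram

variable {σ : Type} [DecidableEq σ] {ψ : Finset σ ⥤ IInj}

theorem map_apply_ne_of_disjoint (hψ : IsSumDiagram ψ) {U V W : Finset σ} (hU : U ≤ W)
    (hV : V ≤ W) (hUV : Disjoint U V) (x : Fin (ψ.obj U).n) (y : Fin (ψ.obj V).n) :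
    (ψ.map (homOfLE hU)).1 x ≠ (ψ.map (homOfLE hV)).1 y := by
  have hW : U ⊔ V ≤ W := sup_le hU hV
  rw [show homOfLE hU = homOfLE le_sup_left ≫ homOfLE hW from rfl,
    show homOfLE hV = homOfLE le_sup_right ≫ homOfLE hW from rfl, ψ.map_comp, ψ.map_comp]
  intro h
  simpa using (hψ U V hUV).1 (a₁ := .inl x) (a₂ := .inr y) ((ψ.map (homOfLE hW)).2 h)

theorem sigma_map_singleton_injective (hψ : IsSumDiagram ψ) (U : Finset σ) :
    Function.Injective fun p : Σ s : U, Fin (ψ.obj {(s : σ)}).n =>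
      (ψ.map (homOfLE (Finset.singleton_subset_iff.2 p.1.2))).1 p.2 := by
  rintro ⟨s, x⟩ ⟨t, y⟩ h
  by_cases hst : s = t
  · subst hst
    obtain rfl : x = y := (ψ.map _).2 h
    rfl
  · exact absurd h (hψ.map_apply_ne_of_disjoint _ _
      (Finset.disjoint_singleton.2 (Subtype.coe_injective.ne hst)) x y)

end IsSumDiagram

namespace IInj

@[simp]
theorem id_val (X : IInj) : (𝟙 X : X ⟶ X).1 = id := rfl

@[simp]
theorem comp_val {X Y Z : IInj} (f : X ⟶ Y) (g : Y ⟶ Z) : (f ≫ g).1 = g.1 ∘ f.1 := rfl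

end IInj

section FreeSumDiagram

variable {σ : Type} (a : σ → IInj)

/-- The free sum diagram on `a` at `U`, before its elements are numbered. -/
abbrev FreeCarrier (U : Finset σ) : Type := Σ s : U, Fin (a s).n

variable {a}

def FreeCarrier.incl {U V : Finset σ} (h : U ≤ V) : FreeCarrier a U → FreeCarrier a V :=
  fun p => ⟨⟨p.1, h p.1.2⟩, p.2⟩

@[simp]
theorem FreeCarrier.incl_refl {U : Finset σ} (p : FreeCarrier a U) : incl le_rfl p = p := rfl

@[simp]
theorem FreeCarrier.incl_incl {U V W : Finset σ} (h : U ≤ V) (h' : V ≤ W) (p : FreeCarrier a U) :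
    incl h' (incl h p) = incl (h.trans h') p := rfl

theorem FreeCarrier.incl_injective {U V : Finset σ} (h : U ≤ V) :
    Function.Injective (incl (a := a) h) := by
  rintro ⟨⟨s, hs⟩, x⟩ ⟨⟨t, ht⟩, y⟩ hxy
  simp only [incl, Sigma.mk.inj_iff, Subtype.mk.injEq] at hxy
  obtain ⟨rfl, hxy⟩ := hxy
  rw [eq_of_heq hxy]

theorem FreeCarrier.sumElim_incl_bijective [DecidableEq σ] {U V : Finset σ}
    (hUV : Disjoint U V) :
    Function.Bijective
      (Sum.elim (incl (a := a) (le_sup_left : U ≤ U ⊔ V)) (incl le_sup_right)) := by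
  constructor
  · rintro (p | p) (q | q) h
    · exact congrArg _ (incl_injective le_sup_left h)
    · exact absurd (congrArg (fun q : FreeCarrier a _ => (q.1 : σ)) h) fun hpq =>
        Finset.disjoint_left.1 hUV p.1.2 (hpq ▸ q.1.2)
    · exact absurd (congrArg (fun q : FreeCarrier a _ => (q.1 : σ)) h) fun hpq =>
        Finset.disjoint_left.1 hUV q.1.2 (hpq ▸ p.1.2)
    · exact congrArg _ (incl_injective le_sup_right h)
  · rintro ⟨⟨s, hs⟩, x⟩
    rcases Finset.mem_union.1 hs with hU | hV
    · exact ⟨.inl ⟨⟨s, hU⟩, x⟩, rfl⟩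
    · exact ⟨.inr ⟨⟨s, hV⟩, x⟩, rfl⟩

variable (a)

noncomputable def freeNumbering (U : Finset σ) :
    FreeCarrier a U ≃ Fin (Fintype.card (FreeCarrier a U)) :=
  Fintype.equivFin _

noncomputable def freeDiagram : Finset σ ⥤ IInj where
  obj U := ⟨Fintype.card (FreeCarrier a U)⟩
  map {U V} h := ⟨freeNumbering a V ∘ FreeCarrier.incl (leOfHom h) ∘ (freeNumbering a U).symm,
    (freeNumbering a V).injective.comp <|
      (FreeCarrier.incl_injective _).comp (freeNumbering a U).symm.injective⟩
  map_id U := Subtype.ext <| funext fun x => by simp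
  map_comp f g := Subtype.ext <| funext fun x => by simp

theorem freeDiagram_map_apply {U V : Finset σ} (h : U ≤ V) (p : FreeCarrier a U) :
    ((freeDiagram a).map (homOfLE h)).1 (freeNumbering a U p) =
      freeNumbering a V (FreeCarrier.incl h p) := by
  simp [freeDiagram]

theorem freeDiagram_isSumDiagram [DecidableEq σ] : IsSumDiagram (freeDiagram a) := by
  intro U V hUV
  have : Sum.elim ((freeDiagram a).map (homOfLE (le_sup_left : U ≤ U ⊔ V))).1
        ((freeDiagram a).map (homOfLE (le_sup_right : V ≤ U ⊔ V))).1 =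
      freeNumbering a (U ⊔ V) ∘
        Sum.elim (FreeCarrier.incl le_sup_left) (FreeCarrier.incl le_sup_right) ∘
        Equiv.sumCongr (freeNumbering a U).symm (freeNumbering a V).symm := by
    funext x; rcases x with x | x <;> rfl
  rw [this]
  exact (freeNumbering a _).bijective.comp
    ((FreeCarrier.sumElim_incl_bijective hUV).comp (Equiv.bijective _))

end FreeSumDiagram

section UniversalProperty

variable {σ : Type} (a : σ → IInj) {ψ : Finset σ ⥤ IInj}

def freeLiftFun (f : ∀ s, a s ⟶ ψ.obj {s}) (U : Finset σ) :
    FreeCarrier a U → Fin (ψ.obj U).n :=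
  fun p => (ψ.map (homOfLE (Finset.singleton_subset_iff.2 p.1.2))).1 ((f p.1).1 p.2)

theorem freeLiftFun_incl (f : ∀ s, a s ⟶ ψ.obj {s}) {U V : Finset σ} (h : U ≤ V)
    (p : FreeCarrier a U) :
    freeLiftFun a f V (FreeCarrier.incl h p) = (ψ.map (homOfLE h)).1 (freeLiftFun a f U p) := by
  show (ψ.map (homOfLE (Finset.singleton_subset_iff.2 p.1.2) ≫ homOfLE h)).1 _ = _
  rw [ψ.map_comp]
  rfl

variable [DecidableEq σ]

theorem freeLiftFun_injective (hψ : IsSumDiagram ψ) (f : ∀ s, a s ⟶ ψ.obj {s}) (U : Finset σ) :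
    Function.Injective (freeLiftFun a f U) :=
  (hψ.sigma_map_singleton_injective U).comp
    (Function.injective_id.sigma_map fun s => (f s).2)

noncomputable def freeLift (hψ : IsSumDiagram ψ) (f : ∀ s, a s ⟶ ψ.obj {s}) :
    freeDiagram a ⟶ ψ where
  app U := ⟨freeLiftFun a f U ∘ (freeNumbering a U).symm,
    (freeLiftFun_injective a hψ f U).comp (freeNumbering a U).symm.injective⟩
  naturality {U V} h := Subtype.ext <| funext fun y => by
    obtain ⟨p, rfl⟩ := (freeNumbering a U).surjective y
    change freeLiftFun a f V ((freeNumbering a V).symm (freeNumbering a V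
        (FreeCarrier.incl (leOfHom h) ((freeNumbering a U).symm (freeNumbering a U p))))) =
      (ψ.map h).1 (freeLiftFun a f U ((freeNumbering a U).symm (freeNumbering a U p)))
    simp only [Equiv.symm_apply_apply]
    exact freeLiftFun_incl a f (leOfHom h) p

noncomputable def freeUnit : a ⟶ (piS σ).obj ⟨freeDiagram a, freeDiagram_isSumDiagram a⟩ :=
  fun s => ⟨fun x => freeNumbering a {s} ⟨⟨s, Finset.mem_singleton_self s⟩, x⟩,
    (freeNumbering a _).injective.comp sigma_mk_injective⟩

theorem freeUnit_comp_freeLift (hψ : IsSumDiagram ψ) (f : ∀ s, a s ⟶ ψ.obj {s}) (s : σ) :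
    freeUnit a s ≫ (freeLift a hψ f).app {s} = f s := by
  refine Subtype.ext <| funext fun x => ?_
  change freeLiftFun a f {s} ((freeNumbering a {s}).symm
    (freeNumbering a {s} ⟨⟨s, Finset.mem_singleton_self s⟩, x⟩)) = (f s).1 x
  rw [Equiv.symm_apply_apply]
  change (ψ.map (𝟙 _)).1 _ = _
  rw [ψ.map_id]
  rfl

theorem freeDiagram_map_freeUnit {U : Finset σ} {s : σ} (hs : s ∈ U) (x : Fin (a s).n) :
    ((freeDiagram a).map (homOfLE (Finset.singleton_subset_iff.2 hs))).1 ((freeUnit a s).1 x) =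
      freeNumbering a U ⟨⟨s, hs⟩, x⟩ :=
  freeDiagram_map_apply a _ _

theorem freeDiagram_hom_ext {g g' : freeDiagram a ⟶ ψ}
    (h : ∀ s, freeUnit a s ≫ g.app {s} = freeUnit a s ≫ g'.app {s}) : g = g' := by
  ext U : 2
  refine Subtype.ext <| funext fun y => ?_
  obtain ⟨⟨⟨s, hs⟩, x⟩, rfl⟩ := (freeNumbering a U).surjective y
  have hU : ({s} : Finset σ) ≤ U := Finset.singleton_subset_iff.2 hs
  have eval (g : freeDiagram a ⟶ ψ) : (g.app U).1 (freeNumbering a U ⟨⟨s, hs⟩, x⟩) =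
      (ψ.map (homOfLE hU)).1 ((freeUnit a s ≫ g.app {s}).1 x) := by
    rw [← freeDiagram_map_freeUnit]
    exact congrFun (congrArg Subtype.val (g.naturality (homOfLE hU))) _
  rw [eval g, eval g', h]

noncomputable def freeArrow : StructuredArrow a (piS σ) :=
  StructuredArrow.mk (freeUnit a)

noncomputable def isInitialFreeArrow : Limits.IsInitial (freeArrow a) :=
  Limits.IsInitial.ofUniqueHom
    (fun Y => StructuredArrow.homMk (ObjectProperty.homMk (freeLift a Y.right.property Y.hom))
      (funext (freeUnit_comp_freeLift a Y.right.property Y.hom)))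
    fun Y m => StructuredArrow.hom_ext _ _ <| ObjectProperty.hom_ext _ <|
      freeDiagram_hom_ext a fun s =>
        (congrFun (StructuredArrow.w m) s).trans
          (freeUnit_comp_freeLift a Y.right.property Y.hom s).symm

end UniversalProperty

theorem units_traces_comma_category_initial_general (σ : Type) [DecidableEq σ]
    (a : σ → IInj) :
    (∃ x : StructuredArrow a (piS σ), Nonempty (Limits.IsInitial x)) ∧
      IsConnected (StructuredArrow a (piS σ)) :=
  ⟨⟨freeArrow a, ⟨isInitialFreeArrow a⟩⟩, isConnected_of_isInitial _ (isInitialFreeArrow a)⟩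

/-- **The comma category `(a ↓ π_S)` has an initial object and is connected.**  For
every object `a ∈ 𝓘^{S̄}`, the comma category `(a ↓ π_S)` of objects of `𝓓(S)` under
`a` has an initial object, and is therefore a connected (indeed contractible)
category. -/
theorem units_traces_comma_category_initial (σ : Type) [Fintype σ] [DecidableEq σ]
    (a : σ → IInj) :
    (∃ x : StructuredArrow a (piS σ), Nonempty (Limits.IsInitial x)) ∧
      IsConnected (StructuredArrow a (piS σ)) :=
  units_traces_comma_category_initial_general σ a
end

section
/- Let X be a based set and define the Barratt–Eccles relation on ⨿_{n≥0} Σ_n^{k+1} × X^n generated by (e, α_*(x)) ∼ (α^*(e), x) for every injection α : Fin m → Fin n, where α_* : X^m → X^n extends by the basepoint and α^* : Σ_n^{k+1} → Σ_m^{k+1} is the induced restriction of permutations. Then block sum of permutations induces a well-defined associative and unital multiplication on the quotient, i.e. [σ, x]·[σ', x'] = [σ ⊕ σ', (x,x')] is independent of representatives and makes the quotient a monoid. -/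
open Equiv

/-- For an injection `α : Fin m → Fin n` and a permutation `σ` of `Fin n`, the
permutation `α^*(σ)` of `Fin m` determined by the unique factorization
`σ ∘ α = β ∘ α^*(σ)` with `β` order-preserving injective: `α^*(σ) i` is the rank of
`σ (α i)` in the image of `σ ∘ α`. -/
noncomputable def permRestrict {m n : ℕ} (α : Fin m → Fin n) (hα : Function.Injective α)
    (σ : Equiv.Perm (Fin n)) : Equiv.Perm (Fin m) :=
  Equiv.ofBijective
    (fun i =>
      (Finset.orderIsoOfFin (Finset.univ.image (σ ∘ α))
          (by rw [Finset.card_image_of_injective _ (σ.injective.comp hα),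
                Finset.card_univ, Fintype.card_fin])).symm
        ⟨σ (α i), Finset.mem_image_of_mem _ (Finset.mem_univ i)⟩)
    (Finite.injective_iff_bijective.mp (by
      intro a b hab
      have h := congrArg Subtype.val
        (((Finset.orderIsoOfFin _ _).symm.injective hab))
      exact hα (σ.injective h)))

/-- Extension by the basepoint: `α_*(x)_j = x_i` if `α i = j`, and the basepoint
otherwise. -/
noncomputable def extendByBase {X : Type} (x₀ : X) {m n : ℕ} (α : Fin m → Fin n)
    (x : Fin m → X) : Fin n → X := fun j =>
  if h : ∃ i, α i = j then x h.choose else x₀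

/-- The block-sum permutation `σ ⊕ σ'` of `Fin (n + n')`. -/
def blockSumPerm {n n' : ℕ} (σ : Equiv.Perm (Fin n)) (σ' : Equiv.Perm (Fin n')) :
    Equiv.Perm (Fin (n + n')) :=
  finSumFinEquiv.permCongr (Equiv.sumCongr σ σ')

/-- Elements of degree `k` of the Barratt–Eccles construction on a based set `X`,
before dividing out the relation: triples `(n, (σ₀,…,σ_k), (x₁,…,x_n))`. -/
def BEPre (X : Type) (k : ℕ) : Type :=
  Σ n : ℕ, (Fin (k + 1) → Equiv.Perm (Fin n)) × (Fin n → X)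

/-- The Barratt–Eccles relation, generated by `(e, α_*(x)) ∼ (α^*(e), x)` for every
injection `α : Fin m → Fin n`. -/
def BERel (X : Type) (x₀ : X) (k : ℕ) : BEPre X k → BEPre X k → Prop :=
  fun a b =>
    ∃ (m n : ℕ) (α : Fin m → Fin n) (hα : Function.Injective α)
      (e : Fin (k + 1) → Equiv.Perm (Fin n)) (x : Fin m → X),
      a = ⟨n, e, extendByBase x₀ α x⟩ ∧
        b = ⟨m, fun t => permRestrict α hα (e t), x⟩

/-- Degree `k` of the Barratt–Eccles construction on the based set `(X, x₀)`. -/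
def BE (X : Type) (x₀ : X) (k : ℕ) : Type := Quot (BERel X x₀ k)

/-!
The restriction `α^*(σ)` is the unique permutation of `Fin m` that orders `Fin m` the way
`σ ∘ α` does. Hence restriction commutes with block sums,
`(α ⊔ β)^*(σ ⊕ σ') = α^*(σ) ⊕ β^*(σ')`, and extension by the basepoint commutes with
concatenation, `(α ⊔ β)_*(x, x') = (α_*(x), β_*(x'))`. So multiplying two generating relations
(or one with the trivial relation along `α = id`) gives a generating relation, and the product
descends to the quotient. Associativity and unitality hold already on representatives, up to the
reindexing `Fin (n₁ + n₂ + n₃) ≃ Fin (n₁ + (n₂ + n₃))`.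
-/

section permRestrict

variable {m n : ℕ} {α : Fin m → Fin n} (hα : Function.Injective α) (σ : Perm (Fin n))

theorem permRestrict_lt_iff (i i' : Fin m) :
    permRestrict α hα σ i < permRestrict α hα σ i' ↔ σ (α i) < σ (α i') := by
  simp only [permRestrict, Equiv.ofBijective_apply, OrderIso.lt_iff_lt, Subtype.mk_lt_mk]

theorem permRestrict_eq_of_lt_iff (τ : Perm (Fin m))
    (h : ∀ i i', τ i < τ i' ↔ σ (α i) < σ (α i')) : permRestrict α hα σ = τ := by
  have hmono : StrictMono (permRestrict α hα σ ∘ τ.symm) := fun a b hab => by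
    simpa only [Function.comp_apply, permRestrict_lt_iff, ← h, τ.apply_symm_apply] using hab
  ext i
  simpa using congrArg Fin.val (hmono.apply_eq (x := τ i))

end permRestrict

theorem permRestrict_id {m : ℕ} (σ : Perm (Fin m)) :
    permRestrict id Function.injective_id σ = σ :=
  permRestrict_eq_of_lt_iff _ _ _ fun _ _ => Iff.rfl

section extendByBase

variable {X : Type} (x₀ : X) {m n : ℕ} {α : Fin m → Fin n} (x : Fin m → X)

theorem extendByBase_apply_self (hα : Function.Injective α) (i : Fin m) :
    extendByBase x₀ α x (α i) = x i := by
  have h : ∃ i', α i' = α i := ⟨i, rfl⟩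
  rw [extendByBase, dif_pos h, hα h.choose_spec]

theorem extendByBase_apply_of_forall_ne {j : Fin n} (h : ∀ i, α i ≠ j) :
    extendByBase x₀ α x j = x₀ :=
  dif_neg fun ⟨i, hi⟩ => h i hi

theorem extendByBase_id : extendByBase x₀ id x = x :=
  funext (extendByBase_apply_self x₀ x Function.injective_id)

end extendByBase

@[simp] theorem Fin.castAdd_ne_natAdd {n n' : ℕ} (a : Fin n) (b : Fin n') :
    Fin.castAdd n' a ≠ Fin.natAdd n b :=
  Fin.ne_of_lt (by simp only [Fin.lt_def, Fin.val_castAdd, Fin.val_natAdd]; omega)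

@[simp] theorem Fin.natAdd_ne_castAdd {n n' : ℕ} (a : Fin n) (b : Fin n') :
    Fin.natAdd n b ≠ Fin.castAdd n' a :=
  (Fin.castAdd_ne_natAdd a b).symm

section blockSum

variable {m m' n n' : ℕ}

def blockSumMap (α : Fin m → Fin n) (β : Fin m' → Fin n') : Fin (m + m') → Fin (n + n') :=
  fun i => finSumFinEquiv (Sum.map α β (finSumFinEquiv.symm i))

variable (α : Fin m → Fin n) (β : Fin m' → Fin n')

@[simp] theorem blockSumMap_castAdd (i : Fin m) :
    blockSumMap α β (Fin.castAdd m' i) = Fin.castAdd n' (α i) := by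
  simp [blockSumMap]

@[simp] theorem blockSumMap_natAdd (i : Fin m') :
    blockSumMap α β (Fin.natAdd m i) = Fin.natAdd n (β i) := by
  simp [blockSumMap]

variable {α β}

theorem blockSumMap_injective (hα : Function.Injective α) (hβ : Function.Injective β) :
    Function.Injective (blockSumMap α β) :=
  finSumFinEquiv.injective.comp ((hα.sumMap hβ).comp finSumFinEquiv.symm.injective)

@[simp] theorem coe_blockSumPerm (σ : Perm (Fin n)) (σ' : Perm (Fin n')) :
    ⇑(blockSumPerm σ σ') = blockSumMap σ σ' :=
  rfl

theorem permRestrict_blockSumPerm (hα : Function.Injective α) (hβ : Function.Injective β)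
    (σ : Perm (Fin n)) (σ' : Perm (Fin n')) :
    permRestrict (blockSumMap α β) (blockSumMap_injective hα hβ) (blockSumPerm σ σ') =
      blockSumPerm (permRestrict α hα σ) (permRestrict β hβ σ') := by
  refine permRestrict_eq_of_lt_iff _ _ _ fun i i' => ?_
  induction i using Fin.addCases <;> induction i' using Fin.addCases <;>
    simp only [coe_blockSumPerm, blockSumMap_castAdd, blockSumMap_natAdd, Fin.lt_def,
      Fin.val_castAdd, Fin.val_natAdd, Nat.add_lt_add_iff_left] <;>
    first | omega | simp only [← Fin.lt_def, permRestrict_lt_iff]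

theorem extendByBase_blockSumMap {X : Type} (x₀ : X) (hα : Function.Injective α)
    (hβ : Function.Injective β) (x : Fin m → X) (x' : Fin m' → X) :
    extendByBase x₀ (blockSumMap α β) (Fin.append x x') =
      Fin.append (extendByBase x₀ α x) (extendByBase x₀ β x') := by
  have hαβ := blockSumMap_injective hα hβ
  funext j
  induction j using Fin.addCases with
  | left a =>
    rw [Fin.append_left]
    by_cases ha : ∃ i, α i = a
    · obtain ⟨i, rfl⟩ := ha
      rw [← blockSumMap_castAdd α β, extendByBase_apply_self x₀ _ hαβ, Fin.append_left,
        extendByBase_apply_self x₀ x hα]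
    · simp only [not_exists] at ha
      rw [extendByBase_apply_of_forall_ne x₀ x ha, extendByBase_apply_of_forall_ne]
      intro i
      induction i using Fin.addCases <;> simp [ha]
  | right b =>
    rw [Fin.append_right]
    by_cases hb : ∃ i, β i = b
    · obtain ⟨i, rfl⟩ := hb
      rw [← blockSumMap_natAdd α β, extendByBase_apply_self x₀ _ hαβ, Fin.append_right,
        extendByBase_apply_self x₀ x' hβ]
    · simp only [not_exists] at hb
      rw [extendByBase_apply_of_forall_ne x₀ x' hb, extendByBase_apply_of_forall_ne]
      intro i
      induction i using Fin.addCases <;> simp [hb]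

end blockSum

theorem blockSumMap_assoc {m₁ m₂ m₃ n₁ n₂ n₃ : ℕ} (f₁ : Fin m₁ → Fin n₁)
    (f₂ : Fin m₂ → Fin n₂) (f₃ : Fin m₃ → Fin n₃) (i : Fin (m₁ + m₂ + m₃)) :
    Fin.cast (Nat.add_assoc n₁ n₂ n₃) (blockSumMap (blockSumMap f₁ f₂) f₃ i) =
      blockSumMap f₁ (blockSumMap f₂ f₃) (Fin.cast (Nat.add_assoc m₁ m₂ m₃) i) := by
  induction i using Fin.addCases with
  | left i =>
    induction i using Fin.addCases <;> simp only [blockSumMap_castAdd, blockSumMap_natAdd] <;>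
      simp [Fin.castAdd_castAdd, Fin.castAdd_natAdd]
  | right i =>
    simp only [blockSumMap_natAdd]
    simp [← Fin.natAdd_natAdd]

namespace BEPre

variable {X : Type} {k : ℕ}

theorem mk_eq_mk {n n' : ℕ} (h : n = n') {e : Fin (k + 1) → Perm (Fin n)}
    {e' : Fin (k + 1) → Perm (Fin n')} {x : Fin n → X} {x' : Fin n' → X}
    (he : ∀ t i, Fin.cast h (e t i) = e' t (Fin.cast h i)) (hx : x = x' ∘ Fin.cast h) :
    (⟨n, e, x⟩ : BEPre X k) = ⟨n', e', x'⟩ := by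
  subst h
  simp only [Fin.cast_eq_self] at he hx
  rw [hx, show e = e' from funext fun t => Equiv.ext (he t)]
  rfl

def mul (a b : BEPre X k) : BEPre X k :=
  ⟨a.1 + b.1, fun t => blockSumPerm (a.2.1 t) (b.2.1 t), Fin.append a.2.2 b.2.2⟩

def one : BEPre X k := ⟨0, fun _ => 1, Fin.elim0⟩

theorem mul_assoc (a b c : BEPre X k) : (a.mul b).mul c = a.mul (b.mul c) :=
  mk_eq_mk (Nat.add_assoc _ _ _) (fun _ => blockSumMap_assoc _ _ _) (Fin.append_assoc _ _ _)

theorem one_mul (a : BEPre X k) : one.mul a = a := by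
  refine mk_eq_mk (Nat.zero_add _) (fun _ i => ?_) (Fin.elim0_append _)
  induction i using Fin.addCases with
  | left i => exact i.elim0
  | right i => dsimp only [one]; simp only [coe_blockSumPerm, blockSumMap_natAdd]; simp

theorem mul_one (a : BEPre X k) : a.mul one = a := by
  refine mk_eq_mk (Nat.add_zero _) (fun _ i => ?_) (Fin.append_elim0 _)
  induction i using Fin.addCases with
  | left i => dsimp only [one]; simp only [coe_blockSumPerm, blockSumMap_castAdd]; simp
  | right i => exact i.elim0

end BEPre

namespace BERel

variable {X : Type} {x₀ : X} {k : ℕ}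

theorem refl (a : BEPre X k) : BERel X x₀ k a a := by
  obtain ⟨n, e, x⟩ := a
  exact ⟨n, n, id, Function.injective_id, e, x, by rw [extendByBase_id],
    by simp only [permRestrict_id]; rfl⟩

theorem mul {a a' b b' : BEPre X k} (ha : BERel X x₀ k a a') (hb : BERel X x₀ k b b') :
    BERel X x₀ k (a.mul b) (a'.mul b') := by
  obtain ⟨m, n, α, hα, e, x, rfl, rfl⟩ := ha
  obtain ⟨m', n', β, hβ, e', x', rfl, rfl⟩ := hb
  refine ⟨m + m', n + n', blockSumMap α β, blockSumMap_injective hα hβ,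
    fun t => blockSumPerm (e t) (e' t), Fin.append x x', ?_, ?_⟩
  · rw [extendByBase_blockSumMap x₀ hα hβ]
    rfl
  · simp only [BEPre.mul]
    congr 2
    funext t
    exact (permRestrict_blockSumPerm hα hβ (e t) (e' t)).symm

end BERel

/-- **Block sum of permutations makes the Barratt–Eccles construction a monoid.**
The formula `[σ, x]·[σ', x'] = [σ ⊕ σ', (x, x')]` is independent of representatives and
defines an associative multiplication on the quotient with unit `[(); ()]` (the class of
the empty tuple). -/
theorem units_traces_barratt_eccles_monoid (X : Type) (x₀ : X) (k : ℕ) :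
    ∃ mul : BE X x₀ k → BE X x₀ k → BE X x₀ k,
      -- the multiplication is given on representatives by block sum and concatenation
      (∀ (n n' : ℕ) (e : Fin (k + 1) → Equiv.Perm (Fin n))
          (e' : Fin (k + 1) → Equiv.Perm (Fin n')) (x : Fin n → X) (x' : Fin n' → X),
        mul (Quot.mk _ ⟨n, e, x⟩) (Quot.mk _ ⟨n', e', x'⟩) =
          Quot.mk _ ⟨n + n', fun t => blockSumPerm (e t) (e' t), Fin.append x x'⟩) ∧
      -- associativity
      (∀ a b c, mul (mul a b) c = mul a (mul b c)) ∧
      -- the empty configuration is a two-sided unit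
      (∀ a, mul (Quot.mk _ ⟨0, fun _ => 1, Fin.elim0⟩) a = a ∧
        mul a (Quot.mk _ ⟨0, fun _ => 1, Fin.elim0⟩) = a) := by
  refine ⟨Quot.map₂ BEPre.mul (fun a _ _ hb => (BERel.refl a).mul hb)
    (fun _ _ b ha => ha.mul (BERel.refl b)), fun _ _ _ _ _ _ => rfl, ?_, ?_⟩
  · rintro ⟨a⟩ ⟨b⟩ ⟨c⟩
    exact congrArg (Quot.mk _) (BEPre.mul_assoc a b c)
  · rintro ⟨a⟩
    exact ⟨congrArg (Quot.mk _) (BEPre.one_mul a), congrArg (Quot.mk _) (BEPre.mul_one a)⟩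
end
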